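/- Let n, p be positive integers with gcd(n, n+p) = 1. For every polynomial P in the span of {T_i(x)T_j(y) : (i,j) ∈ ℕ₀², i/(2(n+p)) + j/(2n) < 1}, the quadrature formula (1/π²)∫∫_{[−1,1]²} P(x,y)(1−x²)^{−1/2}(1−y²)^{−1/2} dx dy = ∑_{A ∈ LD_{n,p}} w_A P(A) is exact, where w_A = 1/(2n(n+p)) if A is a vertex point, 1/(n(n+p)) if A is an edge point, and 2/(n(n+p)) if A is an interior self-intersection point. -/

import Mathlib

open Real

noncomputable def node (n p i j : ℕ) : ℝ × ℝ :=
  (Real.cos (i * π / (n + p)), Real.cos (j * π / n))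

noncomputable def LDidx (n p : ℕ) : Finset (ℕ × ℕ) :=
  (Finset.range (n + p + 1) ×ˢ Finset.range (n + 1)).filter (fun ij => (ij.1 + ij.2) % 2 = 0)

def isVertex (n p : ℕ) (A : ℝ × ℝ) : Prop :=
  A = (1, 1) ∨ A = ((-1 : ℝ) ^ n, (-1 : ℝ) ^ (n + p))

def isBoundary (A : ℝ × ℝ) : Prop := |A.1| = 1 ∨ |A.2| = 1

open Classical in
noncomputable def lisWeight (n p : ℕ) (A : ℝ × ℝ) : ℝ :=
  if isVertex n p A then 1 / (2 * n * (n + p))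
  else if isBoundary A then 1 / (n * (n + p))
  else 2 / (n * (n + p))

/-!
Substituting `x = cos θ`, `y = cos φ` turns the weighted integral of `T_i(x) T_j(y)` into
`∫∫ cos(iθ) cos(jφ)` over `[0, π]²`, which is `π²` at `(i, j) = (0, 0)` and `0` otherwise.

The nodes are the grid points `(cos(aπ/(n+p)), cos(bπ/n))` with `a + b` even. Since `n` and `n + p`
are not both even, the two vertices are exactly the grid corners with `a + b` even, so every weight
is `2/(n(n+p))` times a product of one-dimensional trapezoidal weights. Writing the parity condition
as `(1 + (-1)^a (-1)^b)/2` and absorbing `(-1)^a` into `cos((i + n + p)aπ/(n+p))`, the quadrature sum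
of `T_i T_j` becomes a sum of two products of trapezoidal cosine sums, and equals
`[2(n+p) ∣ i][2n ∣ j] + [2(n+p) ∣ i + n + p][2n ∣ j + n]`. In the index range of `P` this is nonzero
only at `(0, 0)` and at `(n + p, n)`, and the coefficient at `(n + p, n)` vanishes because that index
lies on the line `i/(2(n+p)) + j/(2n) = 1`.
-/

open Finset MeasureTheory
open Polynomial.Chebyshev (T measureT)

theorem integral_eval_T_real_measureT (k : ℤ) :
    ∫ x, (T ℝ k).eval x ∂measureT = if k = 0 then π else 0 := by
  split_ifs with hk
  · rw [hk, Polynomial.Chebyshev.integral_eval_T_real_measureT_zero]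
  · exact Polynomial.Chebyshev.integral_eval_T_real_measureT_of_ne_zero hk

theorem integral_integral_div_sqrt_eq_integral_measureT (F : ℝ → ℝ → ℝ) :
    ∫ x in (-1 : ℝ)..1, ∫ y in (-1 : ℝ)..1, F x y / (√(1 - x ^ 2) * √(1 - y ^ 2)) =
      ∫ x, ∫ y, F x y ∂measureT ∂measureT := by
  rw [Polynomial.Chebyshev.integral_measureT]
  refine intervalIntegral.integral_congr fun x _ ↦ ?_
  rw [Polynomial.Chebyshev.integral_measureT, ← intervalIntegral.integral_mul_const]
  refine intervalIntegral.integral_congr fun y _ ↦ ?_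
  simp only [div_eq_mul_inv, mul_inv, Real.sqrt_inv]
  ring

theorem integral_integral_sum_T_mul_T_measureT (s : Finset (ℕ × ℕ)) (c : ℕ × ℕ → ℝ)
    (hs : (0, 0) ∈ s) :
    ∫ x, ∫ y, ∑ ij ∈ s, c ij * (T ℝ ij.1).eval x * (T ℝ ij.2).eval y ∂measureT ∂measureT =
      π ^ 2 * c (0, 0) := by
  have hmoment (a : ℝ) (k : ℕ) : ∫ x, a * (T ℝ k).eval x ∂measureT = if k = 0 then a * π else 0 := by
    rw [integral_const_mul, integral_eval_T_real_measureT]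
    simp
  have hT (a : ℝ) (k : ℕ) : Integrable (fun x ↦ a * (T ℝ k).eval x) measureT :=
    (Polynomial.Chebyshev.integrable_measureT (Polynomial.continuous _).continuousOn).const_mul a
  have hinner (x : ℝ) : ∫ y, ∑ ij ∈ s, c ij * (T ℝ ij.1).eval x * (T ℝ ij.2).eval y ∂measureT =
      ∑ ij ∈ s, if ij.2 = 0 then c ij * π * (T ℝ ij.1).eval x else 0 := by
    rw [integral_finsetSum _ fun ij _ ↦ hT _ ij.2]
    refine sum_congr rfl fun ij _ ↦ ?_
    rw [hmoment]
    split_ifs <;> ring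
  simp_rw [hinner, ← ite_zero_mul]
  rw [integral_finsetSum _ fun ij _ ↦ hT _ ij.1, sum_eq_single_of_mem _ hs]
  · simp only [hmoment, if_true]
    ring
  · rintro ⟨i, j⟩ _ hij
    rw [hmoment]
    split_ifs <;> simp_all

noncomputable def trapezoidWeight (m a : ℕ) : ℝ := if a = 0 ∨ a = m then 1 / 2 else 1

theorem sum_trapezoidWeight_mul {m : ℕ} (hm : 0 < m) (f : ℕ → ℝ) :
    ∑ a ∈ range (m + 1), trapezoidWeight m a * f a = ∑ a ∈ range m, (f a + f (a + 1)) / 2 := by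
  have hsplit : ∀ a ∈ range (m + 1), trapezoidWeight m a * f a =
      f a - (if a = 0 then f 0 / 2 else 0) - (if a = m then f m / 2 else 0) := by
    intro a _
    unfold trapezoidWeight
    split_ifs <;> subst_vars <;> first | omega | ring
  rw [sum_congr rfl hsplit, sum_sub_distrib, sum_sub_distrib, sum_ite_eq', sum_ite_eq',
    if_pos (by simp), if_pos (by simp), ← sum_div, sum_add_distrib]
  linarith [sum_range_succ f m, sum_range_succ' f m]

theorem two_mul_sin_mul_sum_cos (θ : ℝ) (m : ℕ) :
    2 * sin θ * ∑ a ∈ range m, (cos (2 * a * θ) + cos (2 * (a + 1) * θ)) / 2 =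
      sin (2 * m * θ) * cos θ := by
  induction m with
  | zero => simp
  | succ m ih =>
    rw [sum_range_succ, mul_add, ih]
    push_cast
    rw [show 2 * ((m : ℝ) + 1) * θ = 2 * m * θ + 2 * θ by ring, sin_add, cos_add, sin_two_mul,
      cos_two_mul]
    linear_combination (-2 * sin (2 * m * θ) * cos θ) * sin_sq_add_cos_sq θ

theorem sum_trapezoidWeight_mul_cos {m : ℕ} (hm : 0 < m) (k : ℕ) :
    ∑ a ∈ range (m + 1), trapezoidWeight m a * cos (k * (a * π / m)) =
      if 2 * m ∣ k then (m : ℝ) else 0 := by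
  have hm' : (m : ℝ) ≠ 0 := by positivity
  split_ifs with hk
  · obtain ⟨t, rfl⟩ := hk
    have hcos (a : ℕ) : cos ((2 * m * t : ℕ) * (a * π / m)) = 1 := by
      rw [← cos_nat_mul_two_pi (t * a)]
      congr 1
      push_cast
      field_simp
    simp only [hcos, mul_one]
    simpa using sum_trapezoidWeight_mul hm fun _ ↦ 1
  · set θ := k * π / (2 * m)
    have hsin : sin θ ≠ 0 := by
      rw [Ne, sin_eq_zero_iff]
      rintro ⟨q, hq⟩
      have hq' : ((2 * m : ℕ) : ℤ) * q = k := by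
        have h := (eq_div_iff (by positivity : (2 * m : ℝ) ≠ 0)).1 hq
        have : (2 * m : ℝ) * q = k := mul_right_cancel₀ pi_ne_zero (by linear_combination h)
        exact_mod_cast this
      exact hk (Int.natCast_dvd_natCast.mp ⟨q, hq'.symm⟩)
    have hangle (a : ℕ) : (k : ℝ) * (a * π / m) = 2 * a * θ := by
      simp only [θ]; field_simp
    have hsum := two_mul_sin_mul_sum_cos θ m
    have hkπ : sin (2 * m * θ) = 0 := by
      rw [show 2 * (m : ℝ) * θ = k * π by simp only [θ]; field_simp]
      exact sin_nat_mul_pi k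
    rw [hkπ, zero_mul] at hsum
    simp_rw [hangle]
    rw [sum_trapezoidWeight_mul hm]
    push_cast
    simpa [hsin] using hsum

theorem cos_natCast_add_mul_nat_mul_pi_div {m : ℕ} (hm : 0 < m) (k a : ℕ) :
    cos (((k + m : ℕ) : ℝ) * (a * π / m)) = (-1) ^ a * cos (k * (a * π / m)) := by
  rw [← cos_add_nat_mul_pi]
  congr 1
  push_cast
  field_simp

theorem cos_nat_mul_pi_div_eq_cos_iff {a b m : ℕ} (hm : 0 < m) (ha : a ≤ m) (hb : b ≤ m) :
    cos (a * π / m) = cos (b * π / m) ↔ a = b := by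
  have hmem {c : ℕ} (hc : c ≤ m) : (c : ℝ) * π / m ∈ Set.Icc 0 π := by
    refine ⟨by positivity, ?_⟩
    rw [div_le_iff₀ (by positivity), mul_comm π]
    exact mul_le_mul_of_nonneg_right (by exact_mod_cast hc) pi_pos.le
  refine ⟨fun h ↦ ?_, fun h ↦ h ▸ rfl⟩
  have := injOn_cos (hmem ha) (hmem hb) h
  field_simp at this
  exact_mod_cast this

theorem abs_cos_nat_mul_pi_div_eq_one_iff {a m : ℕ} (hm : 0 < m) (ha : a ≤ m) :
    |cos (a * π / m)| = 1 ↔ a = 0 ∨ a = m := by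
  have h0 := cos_nat_mul_pi_div_eq_cos_iff hm ha (Nat.zero_le m)
  have hm' := cos_nat_mul_pi_div_eq_cos_iff hm ha le_rfl
  simp only [CharP.cast_eq_zero, zero_mul, zero_div, cos_zero] at h0
  rw [mul_div_cancel_left₀ _ (by positivity : (m : ℝ) ≠ 0), cos_pi] at hm'
  rw [abs_eq zero_le_one, h0, hm']

theorem node_eq (n p a b : ℕ) : node n p a b = (cos (a * π / (n + p : ℕ)), cos (b * π / n)) := by
  simp [node]

theorem isBoundary_node_iff {n p a b : ℕ} (hn : 0 < n) (ha : a ≤ n + p) (hb : b ≤ n) :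
    isBoundary (node n p a b) ↔ (a = 0 ∨ a = n + p) ∨ (b = 0 ∨ b = n) := by
  rw [isBoundary, node_eq, abs_cos_nat_mul_pi_div_eq_one_iff (by omega) ha,
    abs_cos_nat_mul_pi_div_eq_one_iff hn hb]

theorem isVertex_node_iff {n p a b : ℕ} (hn : 0 < n) (hcop : Nat.Coprime n (n + p))
    (ha : a ≤ n + p) (hb : b ≤ n) (hab : Even (a + b)) :
    isVertex n p (node n p a b) ↔ (a = 0 ∨ a = n + p) ∧ (b = 0 ∨ b = n) := by
  constructor
  · intro h
    have habs : |(node n p a b).1| = 1 ∧ |(node n p a b).2| = 1 := by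
      rcases h with h | h <;> simp [h]
    rwa [node_eq, abs_cos_nat_mul_pi_div_eq_one_iff (by omega) ha,
      abs_cos_nat_mul_pi_div_eq_one_iff hn hb] at habs
  have hnot_even : ¬ (Even n ∧ Even (n + p)) := fun ⟨h₁, h₂⟩ ↦
    absurd (Nat.eq_one_of_dvd_coprimes hcop h₁.two_dvd h₂.two_dvd) (by norm_num)
  have hcos_m : cos (((n : ℝ) + p) * π / (n + p)) = -1 := by
    rw [mul_div_cancel_left₀ _ (by positivity), cos_pi]
  have hcos_n : cos ((n : ℝ) * π / n) = -1 := by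
    rw [mul_div_cancel_left₀ _ (by positivity), cos_pi]
  -- e.g. the corner `(0, n)` has `n` even, so `n + p` is odd and the corner is `((-1)^n, (-1)^(n+p))`
  rintro ⟨ha0 | ha0, hb0 | hb0⟩ <;> rw [ha0, hb0] at hab ⊢ <;>
    rcases Nat.even_or_odd n with hn2 | hn2 <;> rcases Nat.even_or_odd (n + p) with hm2 | hm2 <;>
    simp_all [isVertex, node_eq, Odd.neg_one_pow, Nat.even_add]

theorem lisWeight_node {n p a b : ℕ} (hn : 0 < n) (hcop : Nat.Coprime n (n + p))
    (ha : a ≤ n + p) (hb : b ≤ n) (hab : Even (a + b)) :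
    lisWeight n p (node n p a b) =
      2 / (n * (n + p : ℕ)) * trapezoidWeight (n + p) a * trapezoidWeight n b := by
  have : (n : ℝ) * (n + p) ≠ 0 := by positivity
  push_cast
  rw [lisWeight, isVertex_node_iff hn hcop ha hb hab, isBoundary_node_iff hn ha hb,
    trapezoidWeight, trapezoidWeight]
  split_ifs <;> first | tauto | field_simp

theorem sum_LDidx_lisWeight_mul_T_mul_T {n p : ℕ} (hn : 0 < n) (hcop : Nat.Coprime n (n + p))
    (i j : ℕ) :
    ∑ ab ∈ LDidx n p, lisWeight n p (node n p ab.1 ab.2) *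
        ((T ℝ i).eval (node n p ab.1 ab.2).1 * (T ℝ j).eval (node n p ab.1 ab.2).2) =
      (if 2 * (n + p) ∣ i ∧ 2 * n ∣ j then 1 else 0) +
        (if 2 * (n + p) ∣ i + (n + p) ∧ 2 * n ∣ j + n then 1 else 0) := by
  have hm : 0 < n + p := by omega
  set u : ℕ → ℕ → ℝ := fun k a ↦ trapezoidWeight (n + p) a * cos (k * (a * π / (n + p : ℕ)))
  set v : ℕ → ℕ → ℝ := fun k b ↦ trapezoidWeight n b * cos (k * (b * π / n))
  set c : ℝ := 1 / (n * (n + p : ℕ))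
  have hterm : ∀ a ∈ range (n + p + 1), ∀ b ∈ range (n + 1),
      (if (a + b) % 2 = 0 then lisWeight n p (node n p a b) *
        ((T ℝ i).eval (node n p a b).1 * (T ℝ j).eval (node n p a b).2) else 0) =
      c * (1 + (-1) ^ a * (-1) ^ b) * (u i a * v j b) := by
    intro a ha b hb
    rw [mem_range, Nat.lt_succ_iff] at ha hb
    rw [← pow_add]
    split_ifs with hab
    · rw [lisWeight_node hn hcop ha hb (Nat.even_iff.2 hab), (Nat.even_iff.2 hab).neg_one_pow]
      simp only [node_eq, Polynomial.Chebyshev.T_real_cos, Int.cast_natCast, u, v, c]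
      ring
    · rw [(Nat.odd_iff.2 (by omega)).neg_one_pow]
      ring
  have hsign {m : ℕ} (hpos : 0 < m) (k : ℕ) : ∑ a ∈ range (m + 1),
      (-1) ^ a * (trapezoidWeight m a * cos (k * (a * π / m))) =
      ∑ a ∈ range (m + 1), trapezoidWeight m a * cos ((k + m : ℕ) * (a * π / m)) := by
    simp only [mul_left_comm ((-1 : ℝ) ^ _), cos_natCast_add_mul_nat_mul_pi_div hpos]
  calc _ = ∑ a ∈ range (n + p + 1), ∑ b ∈ range (n + 1),
        c * (1 + (-1) ^ a * (-1) ^ b) * (u i a * v j b) := by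
          rw [LDidx, sum_filter, sum_product]
          exact sum_congr rfl fun a ha ↦ sum_congr rfl (hterm a ha)
    _ = c * ((∑ a ∈ range (n + p + 1), u i a) * (∑ b ∈ range (n + 1), v j b) +
          (∑ a ∈ range (n + p + 1), (-1) ^ a * u i a) *
            (∑ b ∈ range (n + 1), (-1) ^ b * v j b)) := by
          rw [sum_mul_sum, sum_mul_sum, ← sum_add_distrib, mul_sum]
          refine sum_congr rfl fun a _ ↦ ?_
          rw [← sum_add_distrib, mul_sum]
          exact sum_congr rfl fun b _ ↦ by ring
    _ = _ := by
          simp only [u, v, hsign hm, hsign hn, sum_trapezoidWeight_mul_cos hm,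
            sum_trapezoidWeight_mul_cos hn, ite_and, c]
          have : (n : ℝ) * (n + p : ℕ) ≠ 0 := by positivity
          split_ifs <;> field_simp <;> ring

theorem two_mul_dvd_add_self_iff {i m : ℕ} (hm : 0 < m) (hi : i < 2 * m) :
    2 * m ∣ i + m ↔ i = m := by
  refine ⟨fun ⟨t, ht⟩ ↦ ?_, fun h ↦ ⟨1, by omega⟩⟩
  rcases t with _ | _ | t
  · omega
  · omega
  · nlinarith

theorem sum_LDidx_lisWeight_mul_T_mul_T_of_lt {n p i j : ℕ} (hn : 0 < n)
    (hcop : Nat.Coprime n (n + p)) (hi : i < 2 * (n + p)) (hj : j < 2 * n) :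
    ∑ ab ∈ LDidx n p, lisWeight n p (node n p ab.1 ab.2) *
        ((T ℝ i).eval (node n p ab.1 ab.2).1 * (T ℝ j).eval (node n p ab.1 ab.2).2) =
      (if (i, j) = (0, 0) then 1 else 0) + (if (i, j) = (n + p, n) then 1 else 0) := by
  have hdvd {k m : ℕ} (hk : k < m) : m ∣ k ↔ k = 0 :=
    ⟨fun h ↦ Nat.eq_zero_of_dvd_of_lt h hk, fun h ↦ h ▸ dvd_zero m⟩
  simp only [sum_LDidx_lisWeight_mul_T_mul_T hn hcop, two_mul_dvd_add_self_iff (by omega) hi,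
    two_mul_dvd_add_self_iff hn hj, hdvd hi, hdvd hj, Prod.mk.injEq]

theorem sum_LDidx_lisWeight_mul_sum_T_mul_T {n p : ℕ} (hn : 0 < n)
    (hcop : Nat.Coprime n (n + p)) (c : ℕ × ℕ → ℝ) :
    ∑ ab ∈ LDidx n p, lisWeight n p (node n p ab.1 ab.2) *
        ∑ ij ∈ range (2 * (n + p)) ×ˢ range (2 * n),
          c ij * (T ℝ ij.1).eval (node n p ab.1 ab.2).1 * (T ℝ ij.2).eval (node n p ab.1 ab.2).2 =
      c (0, 0) + c (n + p, n) := by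
  calc _ = ∑ ij ∈ range (2 * (n + p)) ×ˢ range (2 * n), c ij *
        ∑ ab ∈ LDidx n p, lisWeight n p (node n p ab.1 ab.2) *
          ((T ℝ ij.1).eval (node n p ab.1 ab.2).1 * (T ℝ ij.2).eval (node n p ab.1 ab.2).2) := by
        simp only [mul_sum]
        rw [sum_comm]
        exact sum_congr rfl fun _ _ ↦ sum_congr rfl fun _ _ ↦ by ring
    _ = ∑ ij ∈ range (2 * (n + p)) ×ˢ range (2 * n),
        c ij * ((if ij = (0, 0) then 1 else 0) + (if ij = (n + p, n) then 1 else 0)) := by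
        refine sum_congr rfl fun ij hij ↦ ?_
        rw [mem_product, mem_range, mem_range] at hij
        rw [sum_LDidx_lisWeight_mul_T_mul_T_of_lt hn hcop hij.1 hij.2]
    _ = _ := by
        simp only [mul_add, mul_ite, mul_one, mul_zero, sum_add_distrib, sum_ite_eq', mem_product,
          mem_range]
        rw [if_pos (by omega), if_pos (by omega)]

theorem lissajous_quadrature_exact_general (n p : ℕ) (hn : 0 < n)
    (hcop : Nat.Coprime n (n + p))
    (c : ℕ × ℕ → ℝ)
    (hsupp : ∀ i j : ℕ, ¬((i : ℝ) / (2 * (n + p)) + (j : ℝ) / (2 * n) < 1) → c (i, j) = 0)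
    (P : ℝ → ℝ → ℝ)
    (hP : ∀ x y, P x y = ∑ ij ∈ Finset.range (2 * (n + p)) ×ˢ Finset.range (2 * n),
      c ij * (Polynomial.Chebyshev.T ℝ ij.1).eval x * (Polynomial.Chebyshev.T ℝ ij.2).eval y) :
    (1 / π ^ 2) * ∫ x in (-1 : ℝ)..1, ∫ y in (-1 : ℝ)..1,
        P x y / (Real.sqrt (1 - x ^ 2) * Real.sqrt (1 - y ^ 2)) =
      ∑ ij ∈ LDidx n p,
        lisWeight n p (node n p ij.1 ij.2) *
          P (node n p ij.1 ij.2).1 (node n p ij.1 ij.2).2 := by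
  have hcorner : c (n + p, n) = 0 := hsupp _ _ <| by
    rw [not_lt, Nat.cast_add]
    field_simp
    norm_num
  rw [integral_integral_div_sqrt_eq_integral_measureT]
  simp_rw [hP]
  rw [integral_integral_sum_T_mul_T_measureT _ _ (by simp [hn]),
    sum_LDidx_lisWeight_mul_sum_T_mul_T hn hcop, hcorner, add_zero]
  field_simp

theorem lissajous_quadrature_exact (n p : ℕ) (hn : 0 < n) (hp : 0 < p)
    (hcop : Nat.Coprime n (n + p))
    (c : ℕ × ℕ → ℝ)
    (hsupp : ∀ i j : ℕ, ¬((i : ℝ) / (2 * (n + p)) + (j : ℝ) / (2 * n) < 1) → c (i, j) = 0)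
    (P : ℝ → ℝ → ℝ)
    (hP : ∀ x y, P x y = ∑ ij ∈ Finset.range (2 * (n + p)) ×ˢ Finset.range (2 * n),
      c ij * (Polynomial.Chebyshev.T ℝ ij.1).eval x * (Polynomial.Chebyshev.T ℝ ij.2).eval y) :
    (1 / π ^ 2) * ∫ x in (-1 : ℝ)..1, ∫ y in (-1 : ℝ)..1,
        P x y / (Real.sqrt (1 - x ^ 2) * Real.sqrt (1 - y ^ 2)) =
      ∑ ij ∈ LDidx n p,
        lisWeight n p (node n p ij.1 ij.2) *
          P (node n p ij.1 ij.2).1 (node n p ij.1 ij.2).2 :=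
  lissajous_quadrature_exact_general n p hn hcop c hsupp P hP
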